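/- arXiv:2212.05804 — 2 statements merged into one kernel-verified Lean document; each statement's English description precedes it below -/
import Mathlib

section
/- Let N ≥ 1 be an integer and let δ₀, δ₁, …, δ_N, δ_{N+1} be real numbers such that δ₀ = δ_{N+1} = 1, δ_k ≥ 1 for all 0 ≤ k ≤ N, and δ_k² ≥ δ_{k−1}·δ_{k+1} for all 1 ≤ k ≤ N−1 (log-concavity). Let p ∈ {1, …, N} be an index such that δ_p = max{δ₁, …, δ_N}. Then for every i ∈ {0, 1, …, N−1} one has δ_p · δ_{p−1}^p · δ_{p+1}^{N−p} ≥ δ_{p−1}^i · δ_{p+1}^{N−1−i} · δ_i · δ_{i+1}. -/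
/-- Auxiliary quantity: the right-hand side of Lemma 2.2 as a function of `i`. -/
def Fa (δ : ℕ → ℝ) (N p i : ℕ) : ℝ :=
  δ (p - 1) ^ i * δ (p + 1) ^ (N - 1 - i) * δ i * δ (i + 1)

/-- Ratio monotonicity from log-concavity: `δ (k+1)/δ k` is non-increasing. -/
lemma ratio_mono (N : ℕ) (δ : ℕ → ℝ)
    (hpos : ∀ k, k ≤ N + 1 → 0 < δ k)
    (hlc : ∀ k, 1 ≤ k → k + 1 ≤ N → (δ k) ^ 2 ≥ δ (k - 1) * δ (k + 1)) :
    ∀ j k, j ≤ k → k + 1 ≤ N → δ j * δ (k + 1) ≤ δ (j + 1) * δ k := by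
  intro j k hjk
  induction k, hjk using Nat.le_induction with
  | base => intro _; linarith [mul_comm (δ j) (δ (j + 1))]
  | succ k hk ih =>
    intro hk2
    have ih' := ih (by omega)
    have hlc' := hlc (k + 1) (by omega) (by omega)
    simp only [Nat.add_sub_cancel] at hlc'
    have hδk : 0 < δ k := hpos k (by omega)
    have hδk1 : 0 < δ (k + 1) := hpos (k + 1) (by omega)
    have hδj : 0 < δ j := hpos j (by omega)
    have h1 : δ j * (δ k * δ (k + 1 + 1)) ≤ δ j * δ (k + 1) ^ 2 :=
      mul_le_mul_of_nonneg_left hlc' hδj.le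
    have h2 : δ j * δ (k + 1) * δ (k + 1) ≤ δ (j + 1) * δ k * δ (k + 1) :=
      mul_le_mul_of_nonneg_right ih' hδk1.le
    have h3 : δ j * δ (k + 1 + 1) * δ k ≤ δ (j + 1) * δ (k + 1) * δ k := by nlinarith
    exact le_of_mul_le_mul_right h3 hδk

/-- Lemma 2.2 of the paper: inequality of (abstract) dynamical degrees.
Given `δ 0 = δ (N+1) = 1`, `δ k ≥ 1` for `k ≤ N`, log-concavity
`(δ k)^2 ≥ δ (k-1) * δ (k+1)` for `1 ≤ k ≤ N-1`, and `p ∈ {1,…,N}` achieving the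
maximum of `δ 1, …, δ N`, one has
`δ p * δ (p-1) ^ p * δ (p+1) ^ (N-p) ≥ δ (p-1) ^ i * δ (p+1) ^ (N-1-i) * δ i * δ (i+1)`
for all `0 ≤ i ≤ N-1`. -/
theorem stmt_0 (N : ℕ) (hN : 1 ≤ N) (δ : ℕ → ℝ)
    (h0 : δ 0 = 1) (hN1 : δ (N + 1) = 1)
    (hge1 : ∀ k, k ≤ N → 1 ≤ δ k)
    (hlc : ∀ k, 1 ≤ k → k + 1 ≤ N → (δ k) ^ 2 ≥ δ (k - 1) * δ (k + 1))
    (p : ℕ) (hp1 : 1 ≤ p) (hpN : p ≤ N)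
    (hmax : ∀ i, 1 ≤ i → i ≤ N → δ i ≤ δ p) :
    ∀ i, i ≤ N - 1 →
      δ p * δ (p - 1) ^ p * δ (p + 1) ^ (N - p) ≥
        δ (p - 1) ^ i * δ (p + 1) ^ (N - 1 - i) * δ i * δ (i + 1) := by
  have hpos : ∀ k, k ≤ N + 1 → 0 < δ k := by
    intro k hk
    rcases eq_or_lt_of_le hk with h | h
    · rw [h, hN1]; norm_num
    · exact lt_of_lt_of_le one_pos (hge1 k (by omega))
  have R := ratio_mono N δ hpos hlc
  -- key inequality for the increasing part
  have hkey_up : ∀ i, i + 2 ≤ p → δ (p + 1) * δ i ≤ δ (p - 1) * δ (i + 2) := by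
    intro i hi
    rcases eq_or_lt_of_le hpN with hpe | hplt
    · -- p = N
      subst hpe
      rw [hN1, one_mul]
      have a := R i (p - 1) (by omega) (by omega)
      rw [show p - 1 + 1 = p from by omega] at a
      have b : δ (i + 1) ≤ δ p := hmax (i + 1) (by omega) (by omega)
      have c : (1 : ℝ) ≤ δ (i + 2) := hge1 (i + 2) (by omega)
      have hp0 : 0 < δ p := hpos p (by omega)
      have hp1' : 0 < δ (p - 1) := hpos (p - 1) (by omega)
      have h3 : δ i * δ p ≤ δ (p - 1) * δ (i + 2) * δ p := by
        nlinarith [mul_le_mul_of_nonneg_right b hp1'.le, mul_pos hp0 hp1']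
      nlinarith
    · -- p < N
      have a := R i (p - 1) (by omega) (by omega)
      rw [show p - 1 + 1 = p from by omega] at a
      have b := R (i + 1) p (by omega) (by omega)
      rw [show i + 1 + 1 = i + 2 from rfl] at b
      have hp0 : 0 < δ p := hpos p (by omega)
      have hi1 : 0 < δ (i + 1) := hpos (i + 1) (by omega)
      have hi0 : 0 < δ i := hpos i (by omega)
      have hpp1 : 0 < δ (p + 1) := hpos (p + 1) (by omega)
      have hpm1 : 0 < δ (p - 1) := hpos (p - 1) (by omega)
      have hi2 : 0 < δ (i + 2) := hpos (i + 2) (by omega)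
      have ab : (δ i * δ p) * (δ (i + 1) * δ (p + 1)) ≤
          (δ (i + 1) * δ (p - 1)) * (δ (i + 2) * δ p) := by
        apply mul_le_mul a b (by positivity) (by positivity)
      have h3 : (δ (p + 1) * δ i) * (δ p * δ (i + 1)) ≤
          (δ (p - 1) * δ (i + 2)) * (δ p * δ (i + 1)) := by nlinarith
      exact le_of_mul_le_mul_right h3 (by positivity)
  -- key inequality for the decreasing part
  have hkey_down : ∀ i, p ≤ i + 1 → i + 2 ≤ N → δ (p - 1) * δ (i + 2) ≤ δ (p + 1) * δ i := by
    intro i hi hi2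
    have a := R (p - 1) i (by omega) (by omega)
    rw [show p - 1 + 1 = p from by omega] at a
    have b := R p (i + 1) (by omega) (by omega)
    rw [show i + 1 + 1 = i + 2 from rfl] at b
    have hp0 : 0 < δ p := hpos p (by omega)
    have hi1 : 0 < δ (i + 1) := hpos (i + 1) (by omega)
    have hi0 : 0 < δ i := hpos i (by omega)
    have hpp1 : 0 < δ (p + 1) := hpos (p + 1) (by omega)
    have hpm1 : 0 < δ (p - 1) := hpos (p - 1) (by omega)
    have hδi2 : 0 < δ (i + 2) := hpos (i + 2) (by omega)
    have ab : (δ (p - 1) * δ (i + 1)) * (δ p * δ (i + 2)) ≤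
        (δ p * δ i) * (δ (p + 1) * δ (i + 1)) := by
      apply mul_le_mul a b (by positivity) (by positivity)
    have h3 : (δ (p - 1) * δ (i + 2)) * (δ p * δ (i + 1)) ≤
        (δ (p + 1) * δ i) * (δ p * δ (i + 1)) := by nlinarith
    exact le_of_mul_le_mul_right h3 (by positivity)
  -- step inequalities for F
  have hstep_up : ∀ i, i + 2 ≤ p → Fa δ N p i ≤ Fa δ N p (i + 1) := by
    intro i hi
    have e : N - 1 - i = (N - 1 - (i + 1)) + 1 := by omega
    have hC : (0 : ℝ) ≤ δ (p - 1) ^ i * δ (p + 1) ^ (N - 1 - (i + 1)) * δ (i + 1) := by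
      have h1 : 0 < δ (p - 1) := hpos (p - 1) (by omega)
      have h2 : 0 < δ (p + 1) := hpos (p + 1) (by omega)
      have h3 : 0 < δ (i + 1) := hpos (i + 1) (by omega)
      positivity
    have key := mul_le_mul_of_nonneg_left (hkey_up i hi) hC
    have e1 : Fa δ N p i =
        δ (p - 1) ^ i * δ (p + 1) ^ (N - 1 - (i + 1)) * δ (i + 1) * (δ (p + 1) * δ i) := by
      unfold Fa; rw [e, pow_succ]; ring
    have e2 : Fa δ N p (i + 1) =
        δ (p - 1) ^ i * δ (p + 1) ^ (N - 1 - (i + 1)) * δ (i + 1) * (δ (p - 1) * δ (i + 2)) := by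
      unfold Fa; rw [pow_succ]; ring
    rw [e1, e2]; exact key
  have hstep_down : ∀ i, p ≤ i + 1 → i + 2 ≤ N → Fa δ N p (i + 1) ≤ Fa δ N p i := by
    intro i hi hi2
    have e : N - 1 - i = (N - 1 - (i + 1)) + 1 := by omega
    have hC : (0 : ℝ) ≤ δ (p - 1) ^ i * δ (p + 1) ^ (N - 1 - (i + 1)) * δ (i + 1) := by
      have h1 : 0 < δ (p - 1) := hpos (p - 1) (by omega)
      have h2 : 0 < δ (p + 1) := hpos (p + 1) (by omega)
      have h3 : 0 < δ (i + 1) := hpos (i + 1) (by omega)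
      positivity
    have key := mul_le_mul_of_nonneg_left (hkey_down i hi hi2) hC
    have e1 : Fa δ N p i =
        δ (p - 1) ^ i * δ (p + 1) ^ (N - 1 - (i + 1)) * δ (i + 1) * (δ (p + 1) * δ i) := by
      unfold Fa; rw [e, pow_succ]; ring
    have e2 : Fa δ N p (i + 1) =
        δ (p - 1) ^ i * δ (p + 1) ^ (N - 1 - (i + 1)) * δ (i + 1) * (δ (p - 1) * δ (i + 2)) := by
      unfold Fa; rw [pow_succ]; ring
    rw [e1, e2]; exact key
  -- F attains its maximum at p - 1
  have hup : ∀ d i, i + d = p - 1 → Fa δ N p i ≤ Fa δ N p (p - 1) := by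
    intro d
    induction d with
    | zero => intro i hi; rw [show i = p - 1 from by omega]
    | succ d ih =>
      intro i hi
      exact le_trans (hstep_up i (by omega)) (ih (i + 1) (by omega))
  have hdown : ∀ i, p - 1 ≤ i → i ≤ N - 1 → Fa δ N p i ≤ Fa δ N p (p - 1) := by
    intro i h1
    induction i, h1 using Nat.le_induction with
    | base => intro _; exact le_refl _
    | succ i hi ih =>
      intro h2
      exact le_trans (hstep_down i (by omega) (by omega)) (ih (by omega))
  -- F (p-1) equals the left-hand side
  have hF : Fa δ N p (p - 1) = δ p * δ (p - 1) ^ p * δ (p + 1) ^ (N - p) := by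
    unfold Fa
    rw [show N - 1 - (p - 1) = N - p from by omega, show p - 1 + 1 = p from by omega]
    rw [show δ (p - 1) ^ (p - 1) * δ (p + 1) ^ (N - p) * δ (p - 1) * δ p
        = δ p * (δ (p - 1) ^ (p - 1) * δ (p - 1)) * δ (p + 1) ^ (N - p) from by ring,
      ← pow_succ, show p - 1 + 1 = p from by omega]
  intro i hi
  rw [ge_iff_le, ← hF]
  show Fa δ N p i ≤ Fa δ N p (p - 1)
  rcases le_or_gt i (p - 1) with h | h
  · exact hup (p - 1 - i) i (by omega)
  · exact hdown i (by omega) hi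
end

section
/- Let D > 0, C ≥ 0 and A be real numbers with A > 1 + 1/D. Then A² > 4/D, so the quadratic t² − A·t + 1/D = 0 has two real roots; let α = (A + √(A² − 4/D))/2 be the larger one, which satisfies α > 1 and 1/(α·D) < 1. Let (h_n)_{n ≥ 0} be a sequence of real numbers which is bounded above and satisfies h_n ≥ 1 for all n, h_{n+2} + h_n/D ≥ A·h_{n+1} − C for all n ≥ 0, and h_1 ≥ h_0 − C. Then h_0 ≤ (α·C/(α − 1)) · (1 − 1/(α·D))^{−1}. -/
/-- Analytic core of Theorem F of the paper: with `D > 0`, `C ≥ 0`, `A > 1 + 1/D`,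
one has `A^2 > 4/D`; letting `α = (A + √(A² - 4/D))/2` be the larger root of
`t² - A t + 1/D = 0`, one has `α > 1` and `1/(α D) < 1`; and for any sequence
`(h n)` bounded above with `h n ≥ 1`, `h (n+2) + h n / D ≥ A * h (n+1) - C` and
`h 1 ≥ h 0 - C`, one has `h 0 ≤ (α C / (α - 1)) * (1 - 1/(α D))⁻¹`. -/
theorem stmt_5 (D C A : ℝ) (hD : 0 < D) (hC : 0 ≤ C) (hA : A > 1 + 1 / D)
    (h : ℕ → ℝ) (hbdd : ∃ M : ℝ, ∀ n, h n ≤ M) (hone : ∀ n, 1 ≤ h n)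
    (hrec : ∀ n, h (n + 2) + h n / D ≥ A * h (n + 1) - C)
    (h01 : h 1 ≥ h 0 - C) :
    A ^ 2 > 4 / D ∧
    ∀ α : ℝ, α = (A + Real.sqrt (A ^ 2 - 4 / D)) / 2 →
      1 < α ∧ 1 / (α * D) < 1 ∧
        h 0 ≤ (α * C / (α - 1)) * (1 - 1 / (α * D))⁻¹ := by
  have hDinv : 0 < 1 / D := by positivity
  have hApos : 0 < A := by linarith
  have hA2 : A ^ 2 > 4 / D := by
    have h1 : 1 < (A - 1) * D := (div_lt_iff₀ hD).mp (by linarith)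
    rw [gt_iff_lt, div_lt_iff₀ hD]
    nlinarith [h1, sq_nonneg (A - 2), mul_pos (pow_pos hApos 2) (show (0:ℝ) < (A-1)*D - 1 by linarith), hApos]
  refine ⟨hA2, ?_⟩
  intro α hα
  set s := Real.sqrt (A ^ 2 - 4 / D) with hs
  have hs0 : 0 ≤ s := Real.sqrt_nonneg _
  have hs2 : s ^ 2 = A ^ 2 - 4 / D := Real.sq_sqrt (by linarith)
  have hquad : α ^ 2 = A * α - 1 / D := by
    rw [hα]; linear_combination hs2 / 4
  have h1neg : 1 - A + 1 / D < 0 := by linarith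
  have hα1 : 1 < α := by
    have h2α : 2 * α ≥ A := by rw [hα]; linarith
    nlinarith [sq_nonneg (1 - α), hquad, h2α, h1neg]
  have hαpos : 0 < α := by linarith
  have hαD : 0 < α * D := by positivity
  set β := 1 / (α * D) with hβ
  have hβpos : 0 < β := by positivity
  have hprod : α * β = 1 / D := by
    rw [hβ]; field_simp
  have hquadD : α ^ 2 * D = A * α * D - 1 := by
    rw [hquad]; field_simp
  have hsum : α + β = A := by
    rw [hβ]; field_simp; linear_combination hquadD
  have hβ1 : β < 1 := by
    have e : (1 - α) * (1 - β) = 1 - A + 1 / D := by linear_combination hprod - hsum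
    nlinarith [e, h1neg, hα1]
  refine ⟨hα1, hβ1, ?_⟩
  -- key recurrence for v n = h (n+1) - β * h n
  have key : ∀ n, h (n+2) - β * h (n+1) ≥ α * (h (n+1) - β * h n) - C := by
    intro n
    have e1 : A * h (n+1) = α * h (n+1) + β * h (n+1) := by rw [← hsum]; ring
    have e2 : h n / D = α * (β * h n) := by
      rw [div_eq_mul_one_div, ← hprod]; ring
    have := hrec n
    linarith [this, e1, e2]
  obtain ⟨M, hM⟩ := hbdd
  set K := C / (α - 1) with hK
  have hαne : α - 1 ≠ 0 := by linarith
  have hKeq : (α - 1) * K = C := by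
    rw [hK, mul_div_assoc', mul_comm]
    exact mul_div_cancel_right₀ C hαne
  have hv0 : h 1 - β * h 0 ≤ K := by
    by_contra hcon
    push_neg at hcon
    have grow : ∀ n, h (n+1) - β * h n - K ≥ α ^ n * (h 1 - β * h 0 - K) := by
      intro n
      induction n with
      | zero => simp
      | succ n ih =>
        have hk := key n
        have hmul := mul_le_mul_of_nonneg_left ih hαpos.le
        have e : α * (h (n+1) - β * h n - K) = α * (h (n+1) - β * h n) - α * K := by ring
        have eK : α * K - K = C := by linear_combination hKeq
        have epow : α ^ (n+1) * (h 1 - β * h 0 - K) = α * (α ^ n * (h 1 - β * h 0 - K)) := by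
          ring
        rw [epow]
        linarith [hk, hmul, e, eK]
    obtain ⟨n, hn⟩ := pow_unbounded_of_one_lt ((M - K) / (h 1 - β * h 0 - K)) hα1
    have hpos : 0 < h 1 - β * h 0 - K := by linarith
    have hgn := grow n
    have hbound : h (n+1) - β * h n ≤ M := by
      have h1 := hM (n+1)
      have h2 : 0 ≤ β * h n := mul_nonneg hβpos.le (by linarith [hone n])
      linarith
    have : (M - K) / (h 1 - β * h 0 - K) ≥ α ^ n := by
      rw [ge_iff_le, le_div_iff₀ hpos]
      linarith
    linarith
  -- conclude
  have h1β : 0 < 1 - β := by linarith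
  have hfinal : (1 - β) * h 0 ≤ α * C / (α - 1) := by
    have e1 : h 0 - C - β * h 0 ≤ K := by linarith [hv0, h01]
    have e2 : (1 - β) * h 0 ≤ K + C := by linarith
    have hKC : K + C = α * C / (α - 1) := by
      rw [hK]; field_simp; ring
    linarith [hKC ▸ e2]
  have hne : (1 - β) ≠ 0 := ne_of_gt h1β
  calc h 0 = ((1 - β) * h 0) * (1 - β)⁻¹ := by
        rw [mul_comm (1 - β) (h 0), mul_inv_cancel_right₀ hne]
    _ ≤ (α * C / (α - 1)) * (1 - β)⁻¹ :=
        mul_le_mul_of_nonneg_right hfinal (by positivity)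
end
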